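/- Let T be a tree on k ≥ 4 vertices that is not a star, and let δ_2(T) denote the smallest vertex degree of T that is larger than 1. If δ_2(T) > 2, then for every n ≥ k, ex_c(n,T) ≥ ⌊(n−1)/(k−1)⌋ · (C(k−2, 2) + δ_2(T) − 1), where C(m,2) denotes the binomial coefficient m choose 2. -/

import Mathlib

open SimpleGraph

/-- `G` contains a copy of `F`, i.e. a subgraph isomorphic to `F`
(given by an injective graph homomorphism). -/
def ContainsCopy {α β : Type*} (F : SimpleGraph α) (G : SimpleGraph β) : Prop :=
  ∃ f : α ↪ β, ∀ ⦃a b : α⦄, F.Adj a b → G.Adj (f a) (f b)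

/-- The connected Turán number `ex_c(n, F)`: the maximum number of edges of a
connected `F`-free simple graph on `n` vertices. -/
noncomputable def exConn {α : Type*} (n : ℕ) (F : SimpleGraph α) : ℕ :=
  sSup {m | ∃ G : SimpleGraph (Fin n), G.Connected ∧ ¬ ContainsCopy F G ∧ m = G.edgeSet.ncard}

/-- `G` is a star: some vertex is adjacent to all other vertices and every edge is
incident to it. -/
def IsStar {V : Type*} (G : SimpleGraph V) : Prop :=
  ∃ v, (∀ u, u ≠ v → G.Adj v u) ∧ ∀ x y, G.Adj x y → x = v ∨ y = v

/-- `δ_2(G)`: the smallest vertex degree of `G` that is larger than 1. -/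
noncomputable def delta2 {V : Type*} [Fintype V] (G : SimpleGraph V)
    [DecidableRel G.Adj] : ℕ :=
  sInf {d | 1 < d ∧ ∃ v, G.degree v = d}

/-!
Let `d = δ₂(T)`. Take `⌊(n-1)/(k-1)⌋` blocks, each a clique `K_{k-2}` plus an apex joined to
`d - 2` of its vertices; join every apex to a hub and hang the remaining vertices from the hub as
leaves. Each block carries `C(k-2, 2) + d - 2` edges plus its hub edge.

This graph contains no copy of `T`. Apexes and leaves have degree `< d`, so the internal vertices
of `T` (degree `≥ d`) avoid them; they avoid the hub as well, because in a tree that is not a star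
every vertex has an internal neighbour, while the hub only sees apexes and leaves. So internal
vertices land in cliques. Every edge of `T` has an internal endpoint and clique vertices only see
their own block, hence all of `T` would lie in one block, which has only `k - 1` vertices.
-/

namespace SimpleGraph

variable {V W ι : Type*}

theorem Preconnected.mem_of_adj_closed {G : SimpleGraph V} (hG : G.Preconnected) {s : Set V}
    (hs : ∀ ⦃x y⦄, G.Adj x y → x ∈ s → y ∈ s) {x : V} (hx : x ∈ s) (y : V) : y ∈ s := by
  induction (reachable_iff_reflTransGen x y).mp (hG x y) with
  | refl => exact hx
  | tail _ hyz ih => exact hs hyz ih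

theorem Preconnected.apply_eq_of_adj {G : SimpleGraph V} (hG : G.Preconnected) {f : V → ι}
    (hf : ∀ ⦃x y⦄, G.Adj x y → f x = f y) (x y : V) : f y = f x :=
  hG.mem_of_adj_closed (s := {y | f y = f x}) (fun _ _ hyz hy => (hf hyz).symm.trans hy) rfl y

theorem eq_of_adj_of_degree_le_one {G : SimpleGraph V} {x y z : V} [Fintype (G.neighborSet x)]
    (hx : G.degree x ≤ 1) (hy : G.Adj x y) (hz : G.Adj x z) : y = z := by
  rw [← card_neighborFinset_eq_degree, Finset.card_le_one] at hx
  exact hx y (by simpa using hy) z (by simpa using hz)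

theorem degree_le_card_of_forall_adj_mem {G : SimpleGraph V} {v : V}
    [Fintype (G.neighborSet v)] {s : Finset V} (hs : ∀ w, G.Adj v w → w ∈ s) :
    G.degree v ≤ s.card := by
  rw [← card_neighborFinset_eq_degree]
  exact Finset.card_le_card fun w hw => hs w (by simpa using hw)

theorem Preconnected.two_le_degree_or_of_adj [Fintype V] {G : SimpleGraph V} [DecidableRel G.Adj]
    (hG : G.Preconnected) (hV : 2 < Fintype.card V) {x y : V} (hxy : G.Adj x y) :
    2 ≤ G.degree x ∨ 2 ≤ G.degree y := by
  classical
  by_contra! ⟨hx, hy⟩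
  have hclosed : ∀ ⦃u w⦄, G.Adj u w → u ∈ ({x, y} : Finset V) → w ∈ ({x, y} : Finset V) := by
    rintro u w huw hu
    rcases Finset.mem_insert.mp hu with rfl | hu
    · simp [eq_of_adj_of_degree_le_one (by omega) hxy huw]
    · obtain rfl := Finset.mem_singleton.mp hu
      simp [eq_of_adj_of_degree_le_one (by omega) hxy.symm huw]
  have hall : Finset.univ ⊆ ({x, y} : Finset V) := fun w _ =>
    hG.mem_of_adj_closed (s := ↑({x, y} : Finset V)) hclosed (x := x) (by simp) w
  have := (Finset.card_le_card hall).trans Finset.card_le_two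
  rw [Finset.card_univ] at this
  omega

theorem Preconnected.apply_hom_eq_of_internal_mem [Fintype V] {G : SimpleGraph V}
    [DecidableRel G.Adj] {H : SimpleGraph W} (hG : G.Preconnected) (hV : 2 < Fintype.card V)
    (f : G →g H) {A : Set W} (hA : ∀ v, 2 ≤ G.degree v → f v ∈ A) {β : W → ι}
    (hβ : ∀ ⦃a w⦄, a ∈ A → H.Adj a w → β a = β w) (x y : V) : β (f y) = β (f x) :=
  hG.apply_eq_of_adj (f := β ∘ f) (fun u w huw => by
    rcases hG.two_le_degree_or_of_adj hV huw with hu | hw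
    · exact hβ (hA u hu) (f.map_adj huw)
    · exact (hβ (hA w hw) (f.map_adj huw.symm)).symm) x y

end SimpleGraph

open SimpleGraph

theorem exists_adj_two_le_degree_of_not_isStar {V : Type*} [Fintype V] {G : SimpleGraph V}
    [DecidableRel G.Adj] (hG : G.Preconnected) (hns : ¬ IsStar G) (v : V) :
    ∃ w, G.Adj v w ∧ 2 ≤ G.degree w := by
  by_contra! hleaf
  have hnbr : ∀ ⦃x y⦄, G.Adj v x → G.Adj x y → y = v := fun x y hvx hxy =>
    eq_of_adj_of_degree_le_one (by have := hleaf x hvx; omega) hxy hvx.symm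
  have hall := hG.mem_of_adj_closed (s := {u | u = v ∨ G.Adj v u})
    (by rintro x y hxy (rfl | hvx); exacts [Or.inr hxy, Or.inl (hnbr hvx hxy)]) (Or.inl rfl)
  refine hns ⟨v, fun u hu => (hall u).resolve_left hu, fun x y hxy => ?_⟩
  exact (hall x).imp_right fun hvx => hnbr hvx hxy

theorem containsCopy_iff_isContained {α β : Type*} {F : SimpleGraph α} {G : SimpleGraph β} :
    ContainsCopy F G ↔ F ⊑ G :=
  ⟨fun ⟨f, hf⟩ => ⟨⟨⟨f, fun h => hf h⟩, f.injective⟩⟩,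
    fun ⟨f⟩ => ⟨f.toEmbedding, fun _ _ h => f.toHom.map_adj h⟩⟩

theorem ncard_edgeSet_le_exConn {α W : Type*} [Fintype W] {F : SimpleGraph α} {n : ℕ}
    {G : SimpleGraph W} (hW : Fintype.card W = n) (hG : G.Connected) (hF : ¬ F ⊑ G) :
    G.edgeSet.ncard ≤ exConn n F := by
  let φ := Iso.map (Fintype.equivFinOfCardEq hW) G
  have hbdd : BddAbove {m | ∃ H : SimpleGraph (Fin n), H.Connected ∧ ¬ ContainsCopy F H ∧
      m = H.edgeSet.ncard} := by
    refine ⟨Nat.card (Sym2 (Fin n)), ?_⟩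
    rintro m ⟨H, -, -, rfl⟩
    exact Set.ncard_le_card _
  refine le_csSup hbdd ⟨_, φ.connected_iff.mp hG, ?_, ?_⟩
  · rwa [containsCopy_iff_isContained, ← isContained_congr_right φ]
  · rw [← Nat.card_coe_set_eq, ← Nat.card_coe_set_eq]
    exact Nat.card_congr φ.mapEdgeSet

theorem exists_degree_eq_delta2 {V : Type*} [Fintype V] {G : SimpleGraph V} [DecidableRel G.Adj]
    (h : 0 < delta2 G) : ∃ v, G.degree v = delta2 G :=
  (Nat.sInf_mem (Nat.nonempty_of_pos_sInf h)).2

theorem delta2_le_degree {V : Type*} [Fintype V] {G : SimpleGraph V} [DecidableRel G.Adj]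
    {v : V} (hv : 2 ≤ G.degree v) : delta2 G ≤ G.degree v :=
  Nat.sInf_le ⟨hv, v, rfl⟩

/-- `inl (i, none)` is the apex of block `i` and `inl (i, some a)` the vertex `a` of its clique;
`inr none` is the hub and `inr (some j)` a leaf hanging from it. -/
abbrev HubVert (t c r : ℕ) := (Fin t × Option (Fin c)) ⊕ Option (Fin r)

section HubGraph

variable {t c e r : ℕ}

def hubRel (e : ℕ) : HubVert t c r → HubVert t c r → Prop
  | .inl (i, some a), .inl (j, some b) => i = j ∧ a ≠ b
  | .inl (i, none), .inl (j, some b) => i = j ∧ (b : ℕ) < e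
  | .inl (_, none), .inr none => True
  | .inr none, .inr (some _) => True
  | _, _ => False

def hubGraph (t c e r : ℕ) : SimpleGraph (HubVert t c r) := .fromRel (hubRel e)

theorem hubGraph_connected (hc : 1 ≤ c) (he : 1 ≤ e) : (hubGraph t c e r).Connected := by
  have apex (i : Fin t) : (hubGraph t c e r).Reachable (.inr none) (.inl (i, none)) :=
    Adj.reachable (by simp [hubGraph, hubRel])
  refine (connected_iff_exists_forall_reachable _).mpr ⟨.inr none, ?_⟩
  rintro (⟨i, _ | a⟩ | _ | j)
  · exact apex i
  · have h₀ : (hubGraph t c e r).Adj (.inl (i, none)) (.inl (i, some ⟨0, hc⟩)) := by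
      simp [hubGraph, hubRel]; omega
    refine (apex i).trans (h₀.reachable.trans ?_)
    by_cases ha : a = ⟨0, hc⟩
    · rw [ha]
    · exact Adj.reachable (by simp [hubGraph, hubRel, Ne.symm ha])
  · rfl
  · exact Adj.reachable (by simp [hubGraph, hubRel])

theorem hubGraph_degree_apex_le [DecidableRel (hubGraph t c e r).Adj] (hec : e ≤ c) (i : Fin t) :
    (hubGraph t c e r).degree (.inl (i, none)) ≤ e + 1 := by
  classical
  calc _ ≤ (insert (.inr none) (Finset.univ.image fun j : Fin e =>
        (.inl (i, some (Fin.castLE hec j)) : HubVert t c r))).card := by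
        refine degree_le_card_of_forall_adj_mem ?_
        rintro (⟨j, _ | b⟩ | _ | j) h <;> simp [hubGraph, hubRel] at h ⊢
        · exact ⟨h.1, ⟨b, h.2⟩, rfl⟩
    _ ≤ e + 1 := (Finset.card_insert_le _ _).trans
        (Nat.add_le_add_right (Finset.card_image_le.trans (by simp)) 1)

theorem hubGraph_degree_leaf_le [DecidableRel (hubGraph t c e r).Adj] (j : Fin r) :
    (hubGraph t c e r).degree (.inr (some j)) ≤ 1 :=
  degree_le_card_of_forall_adj_mem (s := {.inr none}) <| by
    rintro (⟨_, _ | _⟩ | _ | _) h <;> simp_all [hubGraph, hubRel]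

theorem hubGraph_adj_hub {w : HubVert t c r} (h : (hubGraph t c e r).Adj (.inr none) w) :
    (∃ i, w = .inl (i, none)) ∨ ∃ j, w = .inr (some j) := by
  rcases w with ⟨i, _ | a⟩ | _ | j <;> simp_all [hubGraph, hubRel]

theorem hubGraph_adj_clique {i : Fin t} {a : Fin c} {w : HubVert t c r}
    (h : (hubGraph t c e r).Adj (.inl (i, some a)) w) : ∃ o, w = .inl (i, o) := by
  rcases w with ⟨j, _ | b⟩ | _ | j <;> simp_all [hubGraph, hubRel, eq_comm]

theorem hubGraph_free {V : Type*} [Fintype V] {T : SimpleGraph V} [DecidableRel T.Adj]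
    (hT : T.Preconnected) (hns : ¬ IsStar T) (hV : Fintype.card V = c + 2) (hc : 1 ≤ c)
    (hec : e ≤ c) (hdeg : ∀ v, 2 ≤ T.degree v → e + 2 ≤ T.degree v) :
    ¬ T ⊑ hubGraph t c e r := by
  classical
  rintro ⟨f⟩
  have not_apex_or_leaf (v : V) (hv : 2 ≤ T.degree v) :
      (∀ i, f v ≠ .inl (i, none)) ∧ ∀ j, f v ≠ .inr (some j) := by
    have hfv := (hdeg v hv).trans (f.degree_le v)
    refine ⟨fun i hi => ?_, fun j hj => ?_⟩
    · have := hubGraph_degree_apex_le (r := r) hec i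
      rw [hi] at hfv
      omega
    · have := hubGraph_degree_leaf_le (t := t) (c := c) (e := e) j
      rw [hj] at hfv
      omega
  have internal_mem (v : V) (hv : 2 ≤ T.degree v) : f v ∈ {w | ∃ i a, w = .inl (i, some a)} := by
    rcases hfv : f v with ⟨i, _ | a⟩ | _ | j
    · exact absurd hfv ((not_apex_or_leaf v hv).1 i)
    · exact ⟨i, a, rfl⟩
    · obtain ⟨w, hvw, hw⟩ := exists_adj_two_le_degree_of_not_isStar hT hns v
      have hfw := f.toHom.map_adj hvw
      rw [Copy.toHom_apply, hfv] at hfw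
      rcases hubGraph_adj_hub hfw with ⟨i, hi⟩ | ⟨j, hj⟩
      · exact absurd hi ((not_apex_or_leaf w hw).1 i)
      · exact absurd hj ((not_apex_or_leaf w hw).2 j)
    · exact absurd hfv ((not_apex_or_leaf v hv).2 j)
  have : Nonempty V := Fintype.card_pos_iff.mp (by omega)
  obtain ⟨x₀, -, hx₀⟩ := exists_adj_two_le_degree_of_not_isStar hT hns (Classical.arbitrary V)
  obtain ⟨i₀, a₀, hfx₀⟩ := internal_mem x₀ hx₀
  let block : HubVert t c r → Option (Fin t) := Sum.elim (fun p => some p.1) fun _ => none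
  have same_block (v : V) : block (f v) = some i₀ := by
    refine (hT.apply_hom_eq_of_internal_mem (by omega) f.toHom internal_mem ?_ x₀ v).trans ?_
    · rintro _ w ⟨i, a, rfl⟩ h
      obtain ⟨o, rfl⟩ := hubGraph_adj_clique h
      rfl
    · simp [hfx₀, block]
  have hcard := Finset.card_le_card_of_injOn f (s := Finset.univ)
    (t := Finset.univ.image fun o => (.inl (i₀, o) : HubVert t c r))
    (fun v _ => by
      have hv := same_block v
      rcases hfv : f v with ⟨i, o⟩ | _ <;> simp_all [block])
    f.injective.injOn
  have := hcard.trans Finset.card_image_le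
  simp only [Finset.card_univ, Fintype.card_option, Fintype.card_fin] at this
  omega

def hubGraphEdge (hec : e ≤ c) :
    Fin t × ((⊤ : SimpleGraph (Fin c)).edgeSet ⊕ Option (Fin e)) → Sym2 (HubVert t c r)
  | (i, .inl z) => z.1.map fun a => .inl (i, some a)
  | (i, .inr (some j)) => s(.inl (i, none), .inl (i, some (Fin.castLE hec j)))
  | (i, .inr none) => s(.inl (i, none), .inr none)

theorem hubGraphEdge_mem_edgeSet (hec : e ≤ c) (x) :
    hubGraphEdge (r := r) hec x ∈ (hubGraph t c e r).edgeSet := by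
  rcases x with ⟨i, ⟨z, hz⟩ | _ | j⟩
  · induction z using Sym2.ind with
    | _ a b => simp [hubGraphEdge, hubGraph, hubRel, (top_adj a b).mp hz]
  · simp [hubGraphEdge, hubGraph, hubRel]
  · simp [hubGraphEdge, hubGraph, hubRel]

theorem hubGraphEdge_injective (hec : e ≤ c) :
    Function.Injective (hubGraphEdge (t := t) (r := r) hec) := by
  rintro ⟨i, ⟨z, hz⟩ | _ | j⟩ ⟨i', ⟨z', hz'⟩ | _ | j'⟩ h
  all_goals
    try induction z using Sym2.ind
    try induction z' using Sym2.ind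
  all_goals simp [hubGraphEdge] at h ⊢ <;> tauto

theorem hubGraph_ncard_edgeSet (hec : e ≤ c) :
    t * (c.choose 2 + e + 1) ≤ (hubGraph t c e r).edgeSet.ncard := by
  classical
  rw [← Nat.card_coe_set_eq]
  calc t * (c.choose 2 + e + 1)
      = Nat.card (Fin t × ((⊤ : SimpleGraph (Fin c)).edgeSet ⊕ Option (Fin e))) := by
        rw [Nat.card_eq_fintype_card, Fintype.card_prod, Fintype.card_sum, ← edgeFinset_card,
          card_edgeFinset_top_eq_card_choose_two]
        simp [add_assoc]
    _ ≤ _ := Nat.card_le_card_of_injective (fun x => ⟨_, hubGraphEdge_mem_edgeSet hec x⟩)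
        fun x y h => hubGraphEdge_injective hec (congrArg Subtype.val h)

end HubGraph

theorem exConn_ge_of_delta2_general {V : Type*} [Fintype V] (T : SimpleGraph V)
    [DecidableRel T.Adj] (k : ℕ) (hcard : Fintype.card V = k)
    (hT : T.IsTree) (hns : ¬ IsStar T) (hd2 : 2 < delta2 T)
    (n : ℕ) (hn : k ≤ n) :
    (n - 1) / (k - 1) * ((k - 2).choose 2 + delta2 T - 1) ≤ exConn n T := by
  obtain ⟨v, hv⟩ := exists_degree_eq_delta2 (G := T) (by omega)
  have hdk : delta2 T < k := hcard ▸ hv ▸ T.degree_lt_card_verts v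
  set t := (n - 1) / (k - 1)
  have ht : t * (k - 1) ≤ n - 1 := Nat.div_mul_le_self _ _
  have hW : Fintype.card (HubVert t (k - 2) (n - 1 - t * (k - 1))) = n := by
    simp only [Fintype.card_sum, Fintype.card_prod, Fintype.card_option, Fintype.card_fin,
      show k - 2 + 1 = k - 1 by omega]
    omega
  calc t * ((k - 2).choose 2 + delta2 T - 1)
      = t * ((k - 2).choose 2 + (delta2 T - 2) + 1) := by congr 1; omega
    _ ≤ _ := hubGraph_ncard_edgeSet (by omega)
    _ ≤ exConn n T := ncard_edgeSet_le_exConn hW (hubGraph_connected (by omega) (by omega)) <|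
        hubGraph_free hT.connected.preconnected hns (by omega) (by omega) (by omega)
          fun u hu => by have := delta2_le_degree hu; omega

/-- Proposition (second-smallest degree construction): if `T` is a tree on `k ≥ 4`
vertices which is not a star and `δ_2(T) > 2`, then for `n ≥ k`,
`ex_c(n,T) ≥ ⌊(n-1)/(k-1)⌋ (C(k-2, 2) + δ_2(T) - 1)`. -/
theorem exConn_ge_of_delta2 {V : Type*} [Fintype V] (T : SimpleGraph V)
    [DecidableRel T.Adj] (k : ℕ) (hk : 4 ≤ k) (hcard : Fintype.card V = k)
    (hT : T.IsTree) (hns : ¬ IsStar T) (hd2 : 2 < delta2 T)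
    (n : ℕ) (hn : k ≤ n) :
    (n - 1) / (k - 1) * ((k - 2).choose 2 + delta2 T - 1) ≤ exConn n T :=
  exConn_ge_of_delta2_general T k hcard hT hns hd2 n hn
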